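/- Let N ≥ 1, T ∈ ℝ, k = 1/(4(N+2)), and for a constant C > 0 define u_C(x,t) = k|x|²/(T−t) + C·(T−t)^{-N/(N+2)} for x ∈ ℝ^N and t < T. Then: (a) u_C is a classical solution of the porous medium equation with exponent m = 2, i.e. ∂u_C/∂t (x,t) = Δ_x(u_C²)(x,t) at every point of ℝ^N × (−∞,T); and (b) for C₁ > C₂ > 0 the difference u_{C₁}(x,t) − u_{C₂}(x,t) = (C₁−C₂)(T−t)^{-N/(N+2)} is constant in space and tends to +∞ as t → T⁻, so the sup-norm of the difference of these two solutions blows up in finite time. -/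

import Mathlib

open MeasureTheory Real Filter Topology Set

noncomputable section

/-- The Laplacian of `f : ℝ^N → ℝ` at `x`, as the sum of the second derivatives
along the coordinate directions. -/
def lap {N : ℕ} (f : EuclideanSpace ℝ (Fin N) → ℝ) (x : EuclideanSpace ℝ (Fin N)) : ℝ :=
  ∑ i : Fin N, deriv (deriv (fun s : ℝ => f (x + s • EuclideanSpace.single i (1 : ℝ)))) 0

/-- The blow-up solution `u_C(x,t) = k|x|²/(T-t) + C (T-t)^{-N/(N+2)}` of the
porous medium equation with `m = 2`, where `k = 1/(4(N+2))`. -/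
def pmeBlowup (N : ℕ) (T C : ℝ) (x : EuclideanSpace ℝ (Fin N)) (t : ℝ) : ℝ :=
  (1 / (4 * ((N : ℝ) + 2))) * ‖x‖ ^ 2 / (T - t) + C * (T - t) ^ (-(N : ℝ) / (N + 2))

/-!
For fixed `t`, `u_C(·, t) = A + a‖x‖²` with `a = k / (T - t)`, and
`Δ((A + a‖x‖²)²) = 8a²‖x‖² + 4N a (A + a‖x‖²)`. Comparing with `∂ₜu_C`, the `‖x‖²`-terms agree
because `4(N + 2)k = 1`, and the remaining terms because the exponent `-N/(N + 2)` makes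
`∂ₜ(C(T - t)^{-N/(N+2)}) = 4Nk · C(T - t)^{-N/(N+2)} / (T - t)`.
-/

lemma deriv_deriv_sq_quadratic_zero (p q r : ℝ) :
    deriv (deriv fun s : ℝ => (p + q * s + r * s ^ 2) ^ 2) 0 = 2 * (q ^ 2 + 2 * p * r) := by
  have hf (s : ℝ) : HasDerivAt (fun s : ℝ => p + q * s + r * s ^ 2) (q + 2 * r * s) s :=
    (((hasDerivAt_id s).const_mul q).const_add p |>.add
      ((hasDerivAt_pow 2 s).const_mul r)).congr_deriv
      (by simp only [mul_one, Nat.cast_ofNat, Nat.add_one_sub_one, pow_one]; ring)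
  have hg : HasDerivAt (fun s : ℝ => q + 2 * r * s) (2 * r) 0 := by
    simpa using ((hasDerivAt_id (0 : ℝ)).const_mul (2 * r)).const_add q
  have h_deriv : deriv (fun s : ℝ => (p + q * s + r * s ^ 2) ^ 2)
      = fun s => 2 * (p + q * s + r * s ^ 2) * (q + 2 * r * s) :=
    funext fun s => ((hf s).pow 2).deriv.trans (by ring)
  have h_deriv2 : HasDerivAt (fun s => 2 * (p + q * s + r * s ^ 2) * (q + 2 * r * s))
      (2 * (q + 2 * r * 0) * (q + 2 * r * 0) + 2 * (p + q * 0 + r * 0 ^ 2) * (2 * r)) 0 :=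
    ((hf 0).const_mul 2).mul hg
  rw [h_deriv, h_deriv2.deriv]
  ring

lemma norm_add_smul_single_sq {N : ℕ} (x : EuclideanSpace ℝ (Fin N)) (i : Fin N) (s : ℝ) :
    ‖x + s • EuclideanSpace.single i (1 : ℝ)‖ ^ 2 = ‖x‖ ^ 2 + 2 * x i * s + s ^ 2 := by
  rw [norm_add_sq_real, real_inner_smul_right, EuclideanSpace.inner_single_right, norm_smul,
    PiLp.norm_single]
  simp only [norm_one, mul_one, one_mul, Real.norm_eq_abs, sq_abs, conj_trivial]
  ring

lemma lap_sq_add_mul_norm_sq {N : ℕ} (A a : ℝ) (x : EuclideanSpace ℝ (Fin N)) :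
    lap (fun y => (A + a * ‖y‖ ^ 2) ^ 2) x
      = 8 * a ^ 2 * ‖x‖ ^ 2 + 4 * N * a * (A + a * ‖x‖ ^ 2) := by
  have h_line (i : Fin N) :
      deriv (deriv fun s : ℝ => (A + a * ‖x + s • EuclideanSpace.single i (1 : ℝ)‖ ^ 2) ^ 2) 0
        = 8 * a ^ 2 * x i ^ 2 + 4 * a * (A + a * ‖x‖ ^ 2) := by
    simp only [norm_add_smul_single_sq]
    convert deriv_deriv_sq_quadratic_zero (A + a * ‖x‖ ^ 2) (2 * a * x i) a using 4
    · ring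
    · ring
  rw [lap, Finset.sum_congr rfl fun i _ => h_line i, Finset.sum_add_distrib, ← Finset.mul_sum,
    ← EuclideanSpace.real_norm_sq_eq, Finset.sum_const, Finset.card_univ, Fintype.card_fin,
    nsmul_eq_mul]
  ring

lemma tendsto_sub_rpow_nhdsLT_atTop {p : ℝ} (hp : p < 0) (T : ℝ) :
    Tendsto (fun t : ℝ => (T - t) ^ p) (𝓝[<] T) atTop := by
  have h_sub : Tendsto (fun t : ℝ => T - t) (𝓝[<] T) (𝓝[>] 0) :=
    tendsto_nhdsWithin_of_tendsto_nhds_of_eventually_within _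
      (by simpa using ((continuous_sub_left T).tendsto T).mono_left nhdsWithin_le_nhds)
      (eventually_nhdsWithin_of_forall fun t ht => sub_pos.2 (mem_Iio.1 ht))
  exact (tendsto_rpow_neg_nhdsGT_zero hp).comp h_sub

lemma pmeBlowup_eq_add_mul_norm_sq (N : ℕ) (T C : ℝ) (y : EuclideanSpace ℝ (Fin N)) (t : ℝ) :
    pmeBlowup N T C y t
      = C * (T - t) ^ (-(N : ℝ) / (N + 2)) + 1 / (4 * ((N : ℝ) + 2)) / (T - t) * ‖y‖ ^ 2 := by
  rw [pmeBlowup]; ring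

lemma hasDerivAt_pmeBlowup_time (N : ℕ) {T t : ℝ} (ht : t < T) (C : ℝ)
    (x : EuclideanSpace ℝ (Fin N)) :
    HasDerivAt (fun s => pmeBlowup N T C x s)
      (1 / (4 * ((N : ℝ) + 2)) * ‖x‖ ^ 2 / (T - t) ^ 2
        + C * (N / (N + 2)) * (T - t) ^ (-(N : ℝ) / (N + 2) - 1)) t := by
  have hTt : T - t ≠ 0 := (sub_pos.2 ht).ne'
  have h_sub : HasDerivAt (fun s : ℝ => T - s) (-1) t := (hasDerivAt_id t).const_sub T
  exact ((hasDerivAt_const t _).div h_sub hTt |>.add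
    ((h_sub.rpow_const (Or.inl hTt)).const_mul C)).congr_deriv (by ring)

theorem deriv_pmeBlowup_eq_lap_sq (N : ℕ) {T t : ℝ} (ht : t < T) (C : ℝ)
    (x : EuclideanSpace ℝ (Fin N)) :
    deriv (fun s => pmeBlowup N T C x s) t = lap (fun y => (pmeBlowup N T C y t) ^ 2) x := by
  have hTt : T - t ≠ 0 := (sub_pos.2 ht).ne'
  rw [(hasDerivAt_pmeBlowup_time N ht C x).deriv, rpow_sub_one hTt]
  simp only [pmeBlowup_eq_add_mul_norm_sq, lap_sq_add_mul_norm_sq]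
  field_simp
  ring

/-- The functions `u_C` solve the PME `∂_t u = Δ(u²)` classically for `t < T`;
for `C₁ > C₂ > 0` their difference is the spatially constant function
`(C₁-C₂)(T-t)^{-N/(N+2)}`, which blows up as `t → T⁻`, so the sup-norm of the
difference of two solutions blows up in finite time. -/
theorem pme_blowup_solutions (N : ℕ) (hN : 1 ≤ N) (T : ℝ) :
    (∀ C : ℝ, 0 < C → ∀ (x : EuclideanSpace ℝ (Fin N)) (t : ℝ), t < T →
      deriv (fun s => pmeBlowup N T C x s) t
        = lap (fun y => (pmeBlowup N T C y t) ^ 2) x) ∧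
    (∀ C₁ C₂ : ℝ, 0 < C₂ → C₂ < C₁ →
      (∀ (x : EuclideanSpace ℝ (Fin N)) (t : ℝ), t < T →
        pmeBlowup N T C₁ x t - pmeBlowup N T C₂ x t
          = (C₁ - C₂) * (T - t) ^ (-(N : ℝ) / (N + 2))) ∧
      Tendsto (fun t : ℝ => (C₁ - C₂) * (T - t) ^ (-(N : ℝ) / (N + 2)))
        (𝓝[<] T) atTop) := by
  refine ⟨fun C _ x t ht => deriv_pmeBlowup_eq_lap_sq N ht C x, fun C₁ C₂ _ hC => ⟨?_, ?_⟩⟩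
  · intro x t _
    simp only [pmeBlowup]
    ring
  · have h_exp : -(N : ℝ) / (N + 2) < 0 :=
      div_neg_of_neg_of_pos (neg_neg_of_pos (by exact_mod_cast hN)) (by positivity)
    exact (tendsto_sub_rpow_nhdsLT_atTop h_exp T).const_mul_atTop (sub_pos.2 hC)
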